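/- arXiv:2104.13857 — 6 statements merged into one kernel-verified Lean document; each statement's English description precedes it below -/
import Mathlib

section
/- In a slim planar semimodular lattice (a finite planar semimodular lattice with no M3 sublattice), every element has at most two covers. -/
/-!
Three distinct covers `a, b, c` of `x` are pairwise incomparable with pairwise meets `x`. Since `≤`
is the intersection of two linear orders, the cover lying in the middle for the first order, say
`c`, is below `a ⊔ b`. Semimodularity makes `a ⊔ b` cover both `a` and `b`, so
`a ⊔ c = b ⊔ c = a ⊔ b`, and `a, b, c` generate an `M₃`.
-/

/-- A finite lattice is planar iff its order dimension is at most 2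
(Baker–Fishburn–Roberts): the order is the intersection of two linear orders. -/
def IsPlanarLattice (L : Type*) [Lattice L] : Prop :=
  ∃ r₁ r₂ : L → L → Prop, IsLinearOrder L r₁ ∧ IsLinearOrder L r₂ ∧
    ∀ a b : L, a ≤ b ↔ r₁ a b ∧ r₂ a b

/-- Semimodularity: `a ⊓ b ⋖ a` implies `b ⋖ a ⊔ b`. -/
def IsSemimodular (L : Type*) [Lattice L] : Prop :=
  ∀ a b : L, a ⊓ b ⋖ a → b ⋖ a ⊔ b

/-- A lattice contains a sublattice isomorphic to `M₃` iff it has three distinct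
elements with pairwise equal meets and pairwise equal joins. -/
def HasM3Sublattice (L : Type*) [Lattice L] : Prop :=
  ∃ a b c : L, a ≠ b ∧ a ≠ c ∧ b ≠ c ∧
    a ⊓ b = a ⊓ c ∧ a ⊓ c = b ⊓ c ∧ a ⊔ b = a ⊔ c ∧ a ⊔ c = b ⊔ c

/-- A lattice congruence. -/
structure LatticeCon' (L : Type*) [Lattice L] where
  r : L → L → Prop
  iseqv : Equivalence r
  sup_compat : ∀ {a b c d : L}, r a b → r c d → r (a ⊔ c) (b ⊔ d)
  inf_compat : ∀ {a b c d : L}, r a b → r c d → r (a ⊓ c) (b ⊓ d)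

namespace LatticeCon'

variable {L : Type*} [Lattice L]

def toSetoid (α : LatticeCon' L) : Setoid L := ⟨α.r, α.iseqv⟩

/-- The quotient lattice `L/α`. -/
def Quot (α : LatticeCon' L) : Type _ := Quotient α.toSetoid

/-- The quotient map. -/
def mkQ (α : LatticeCon' L) (x : L) : α.Quot := Quotient.mk α.toSetoid x

instance (α : LatticeCon' L) : Max α.Quot :=
  ⟨Quotient.map₂ (· ⊔ ·) fun _ _ h _ _ h' => α.sup_compat h h'⟩

instance (α : LatticeCon' L) : Min α.Quot :=
  ⟨Quotient.map₂ (· ⊓ ·) fun _ _ h _ _ h' => α.inf_compat h h'⟩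

@[simp] theorem mkQ_sup (α : LatticeCon' L) (x y : L) :
    α.mkQ x ⊔ α.mkQ y = α.mkQ (x ⊔ y) := rfl

@[simp] theorem mkQ_inf (α : LatticeCon' L) (x y : L) :
    α.mkQ x ⊓ α.mkQ y = α.mkQ (x ⊓ y) := rfl

instance (α : LatticeCon' L) : Lattice α.Quot :=
  Lattice.mk'
    (fun a b => Quotient.inductionOn₂ a b fun x y => congrArg _ (sup_comm x y))
    (fun a b c => Quotient.inductionOn₃ a b c fun x y z => congrArg _ (sup_assoc x y z))
    (fun a b => Quotient.inductionOn₂ a b fun x y => congrArg _ (inf_comm x y))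
    (fun a b c => Quotient.inductionOn₃ a b c fun x y z => congrArg _ (inf_assoc x y z))
    (fun a b => Quotient.inductionOn₂ a b fun x y => congrArg _ (sup_inf_self (a := x) (b := y)))
    (fun a b => Quotient.inductionOn₂ a b fun x y => congrArg _ (inf_sup_self (a := x) (b := y)))

theorem ext' {α β : LatticeCon' L} (h : ∀ a b, α.r a b ↔ β.r a b) : α = β := by
  have hr : α.r = β.r := funext fun a => funext fun b => propext (h a b)
  cases α; cases β; cases hr; rfl

instance : PartialOrder (LatticeCon' L) where
  le α β := ∀ ⦃a b : L⦄, α.r a b → β.r a b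
  le_refl _ _ _ h := h
  le_trans _ _ _ h h' _ _ hab := h' (h hab)
  le_antisymm _ _ h h' := ext' fun a b => ⟨fun hab => h hab, fun hab => h' hab⟩

instance : OrderTop (LatticeCon' L) where
  top := ⟨fun _ _ => True, ⟨fun _ => trivial, fun _ => trivial, fun _ _ => trivial⟩,
    fun _ _ => trivial, fun _ _ => trivial⟩
  le_top _ _ _ _ := trivial

instance : OrderBot (LatticeCon' L) where
  bot := ⟨Eq, eq_equivalence, fun h h' => by rw [h, h'], fun h h' => by rw [h, h']⟩
  bot_le _ _ _ h := h ▸ (Equivalence.refl (iseqv _) _)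

instance : InfSet (LatticeCon' L) where
  sInf S :=
    ⟨fun a b => ∀ θ ∈ S, θ.r a b,
     ⟨fun _ θ _ => θ.iseqv.refl _,
      fun h θ hθ => θ.iseqv.symm (h θ hθ),
      fun h h' θ hθ => θ.iseqv.trans (h θ hθ) (h' θ hθ)⟩,
     fun h h' θ hθ => θ.sup_compat (h θ hθ) (h' θ hθ),
     fun h h' θ hθ => θ.inf_compat (h θ hθ) (h' θ hθ)⟩

/-- The principal congruence generated by collapsing the pair `(a, b)`. -/
def conPair (a b : L) : LatticeCon' L := sInf {θ : LatticeCon' L | θ.r a b}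

end LatticeCon'

/-- A distributive lattice (as a property). -/
def IsDistribQuot (X : Type*) [Lattice X] : Prop :=
  ∀ x y z : X, x ⊓ (y ⊔ z) = x ⊓ y ⊔ x ⊓ z

/-- A prime ideal of a lattice, as a set. -/
def IsPrimeIdealSet {L : Type*} [Lattice L] (P : Set L) : Prop :=
  P.Nonempty ∧ P ≠ Set.univ ∧
  (∀ x y : L, x ≤ y → y ∈ P → x ∈ P) ∧
  (∀ x y : L, x ∈ P → y ∈ P → x ⊔ y ∈ P) ∧
  (∀ x y : L, x ⊓ y ∈ P → x ∈ P ∨ y ∈ P)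

section Covers

variable {α : Type*}

theorem isAntichain_setOf_covBy [PartialOrder α] (x : α) : IsAntichain (· ≤ ·) {y | x ⋖ y} :=
  fun _ ha _ hb hab hle => hab <| (hb.eq_or_eq ha.le hle).resolve_left ha.ne'

theorem CovBy.sup_eq_of_le_of_not_le [Lattice α] {a c d : α} (had : a ⋖ d) (hcd : c ≤ d)
    (hca : ¬ c ≤ a) : a ⊔ c = d :=
  (had.eq_or_eq le_sup_left (sup_le had.le hcd)).resolve_left
    fun h => hca (h ▸ le_sup_right)

theorem hasM3Sublattice_of_covBy [Lattice α] [IsUpperModularLattice α] {x a b c : α}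
    (ha : x ⋖ a) (hb : x ⋖ b) (hc : x ⋖ c) (hab : a ≠ b) (hac : a ≠ c) (hbc : b ≠ c)
    (hc_le : c ≤ a ⊔ b) : HasM3Sublattice α := by
  have hS := isAntichain_setOf_covBy x
  have hinf_ab : a ⊓ b = x := ha.wcovBy.inf_eq hb.wcovBy hab
  have hinf_ac : a ⊓ c = x := ha.wcovBy.inf_eq hc.wcovBy hac
  have hinf_bc : b ⊓ c = x := hb.wcovBy.inf_eq hc.wcovBy hbc
  have ha_sup : a ⋖ a ⊔ b := covBy_sup_of_inf_covBy_right (hinf_ab ▸ hb)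
  have hb_sup : b ⋖ b ⊔ a := covBy_sup_of_inf_covBy_right (inf_comm a b ▸ hinf_ab ▸ ha)
  have hsup_ac : a ⊔ c = a ⊔ b := ha_sup.sup_eq_of_le_of_not_le hc_le (hS hc ha hac.symm)
  have hsup_bc : b ⊔ c = a ⊔ b := by
    rw [sup_comm a b]
    exact hb_sup.sup_eq_of_le_of_not_le (sup_comm a b ▸ hc_le) (hS hc hb hbc.symm)
  exact ⟨a, b, c, hab, hac, hbc, hinf_ab.trans hinf_ac.symm, hinf_ac.trans hinf_bc.symm,
    hsup_ac.symm, hsup_ac.trans hsup_bc.symm⟩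

end Covers

/-- Of any three elements, one lies `r`-between the other two. -/
theorem exists_between_of_total {α : Type*} (r : α → α → Prop) [Std.Total r] (a b c : α) :
    (r a c ∧ r c b ∨ r b c ∧ r c a) ∨ (r b a ∧ r a c ∨ r c a ∧ r a b) ∨
      (r c b ∧ r b a ∨ r a b ∧ r b c) := by
  have := total_of r a b
  have := total_of r b c
  have := total_of r a c
  tauto

section Planar

variable {L : Type*} [Lattice L]

theorem le_sup_of_between {r₁ r₂ : L → L → Prop} [IsTrans L r₁] [IsTrans L r₂] [Std.Total r₂]
    (hle : ∀ a b : L, a ≤ b ↔ r₁ a b ∧ r₂ a b) {a b c : L} (hac : ¬ a ≤ c) (hbc : ¬ b ≤ c)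
    (hbetween : r₁ a c ∧ r₁ c b ∨ r₁ b c ∧ r₁ c a) : c ≤ a ⊔ b := by
  -- `r₁ c (a ⊔ b)` passes through `b`; `r₂ c (a ⊔ b)` passes through `a`, as `r₂ a c` fails.
  have key : ∀ {a b : L}, ¬ a ≤ c → r₁ a c → r₁ c b → c ≤ a ⊔ b := by
    intro a b hac h₁ac h₁cb
    have h₂ca : r₂ c a :=
      (total_of r₂ c a).resolve_right fun h₂ac => hac ((hle a c).2 ⟨h₁ac, h₂ac⟩)
    exact (hle c (a ⊔ b)).2 ⟨trans_of r₁ h₁cb ((hle b _).1 le_sup_right).1,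
      trans_of r₂ h₂ca ((hle a _).1 le_sup_left).2⟩
  rcases hbetween with ⟨h₁ac, h₁cb⟩ | ⟨h₁bc, h₁ca⟩
  · exact key hac h₁ac h₁cb
  · exact sup_comm b a ▸ key hbc h₁bc h₁ca

theorem IsPlanarLattice.le_sup_of_isAntichain (hP : IsPlanarLattice L) {s : Set L}
    (hs : IsAntichain (· ≤ ·) s) {a b c : L} (ha : a ∈ s) (hb : b ∈ s) (hc : c ∈ s)
    (hab : a ≠ b) (hac : a ≠ c) (hbc : b ≠ c) :
    c ≤ a ⊔ b ∨ a ≤ b ⊔ c ∨ b ≤ c ⊔ a := by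
  obtain ⟨r₁, r₂, h₁, h₂, hle⟩ := hP
  have hle_sup := @le_sup_of_between L _ r₁ r₂ _ _ _ hle
  rcases exists_between_of_total r₁ a b c with h | h | h
  · exact Or.inl (hle_sup (hs ha hc hac) (hs hb hc hbc) h)
  · exact Or.inr (Or.inl (hle_sup (hs hb ha hab.symm) (hs hc ha hac.symm) h))
  · exact Or.inr (Or.inr (hle_sup (hs hc hb hbc.symm) (hs ha hb hab) h))

end Planar

theorem sps_at_most_two_covers_general {L : Type*} [Lattice L]
    (hplanar : IsPlanarLattice L) (hsemi : IsSemimodular L)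
    (hslim : ¬ HasM3Sublattice L) (x : L) :
    Set.ncard {y : L | x ⋖ y} ≤ 2 := by
  have : IsUpperModularLattice L := ⟨hsemi _ _⟩
  by_contra! hmany
  obtain ⟨a, ha, b, hb, c, hc, hab, hac, hbc⟩ :=
    (Set.two_lt_ncard (Set.finite_of_ncard_pos (by omega))).1 hmany
  apply hslim
  rcases hplanar.le_sup_of_isAntichain (isAntichain_setOf_covBy x) ha hb hc hab hac hbc
    with h | h | h
  · exact hasM3Sublattice_of_covBy ha hb hc hab hac hbc h
  · exact hasM3Sublattice_of_covBy hb hc ha hbc hab.symm hac.symm h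
  · exact hasM3Sublattice_of_covBy hc ha hb hac.symm hbc.symm hab h

/-- In a slim planar semimodular lattice, every element has at most two covers. -/
theorem sps_at_most_two_covers {L : Type*} [Lattice L] [Fintype L]
    (hplanar : IsPlanarLattice L) (hsemi : IsSemimodular L)
    (hslim : ¬ HasM3Sublattice L) (x : L) :
    Set.ncard {y : L | x ⋖ y} ≤ 2 :=
  sps_at_most_two_covers_general hplanar hsemi hslim x
end

section
/- Every slim planar semimodular lattice satisfies the meet-semidistributive law: for all x, y, z, if x ∧ y = x ∧ z then x ∧ y = x ∧ (y ∨ z). -/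
/-- A lattice congruence. -/
structure LatticeCongruence (L : Type*) [Lattice L] where
  r : L → L → Prop
  iseqv : Equivalence r
  sup_compat : ∀ {a b c d : L}, r a b → r c d → r (a ⊔ c) (b ⊔ d)
  inf_compat : ∀ {a b c d : L}, r a b → r c d → r (a ⊓ c) (b ⊓ d)

namespace LatticeCongruence

variable {L : Type*} [Lattice L]

def toSetoid (α : LatticeCongruence L) : Setoid L := ⟨α.r, α.iseqv⟩

/-- The quotient lattice `L/α`. -/
def Quot (α : LatticeCongruence L) : Type _ := Quotient α.toSetoid

/-- The quotient map. -/
def mkQ (α : LatticeCongruence L) (x : L) : α.Quot := Quotient.mk α.toSetoid x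

instance (α : LatticeCongruence L) : Max α.Quot :=
  ⟨Quotient.map₂ (· ⊔ ·) fun _ _ h _ _ h' => α.sup_compat h h'⟩

instance (α : LatticeCongruence L) : Min α.Quot :=
  ⟨Quotient.map₂ (· ⊓ ·) fun _ _ h _ _ h' => α.inf_compat h h'⟩

@[simp] theorem mkQ_sup (α : LatticeCongruence L) (x y : L) :
    α.mkQ x ⊔ α.mkQ y = α.mkQ (x ⊔ y) := rfl

@[simp] theorem mkQ_inf (α : LatticeCongruence L) (x y : L) :
    α.mkQ x ⊓ α.mkQ y = α.mkQ (x ⊓ y) := rfl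

instance (α : LatticeCongruence L) : Lattice α.Quot :=
  Lattice.mk'
    (fun a b => Quotient.inductionOn₂ a b fun x y => congrArg _ (sup_comm x y))
    (fun a b c => Quotient.inductionOn₃ a b c fun x y z => congrArg _ (sup_assoc x y z))
    (fun a b => Quotient.inductionOn₂ a b fun x y => congrArg _ (inf_comm x y))
    (fun a b c => Quotient.inductionOn₃ a b c fun x y z => congrArg _ (inf_assoc x y z))
    (fun a b => Quotient.inductionOn₂ a b fun x y => congrArg _ (sup_inf_self (a := x) (b := y)))
    (fun a b => Quotient.inductionOn₂ a b fun x y => congrArg _ (inf_sup_self (a := x) (b := y)))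

theorem ext' {α β : LatticeCongruence L} (h : ∀ a b, α.r a b ↔ β.r a b) : α = β := by
  have hr : α.r = β.r := funext fun a => funext fun b => propext (h a b)
  cases α; cases β; cases hr; rfl

instance : PartialOrder (LatticeCongruence L) where
  le α β := ∀ ⦃a b : L⦄, α.r a b → β.r a b
  le_refl _ _ _ h := h
  le_trans _ _ _ h h' _ _ hab := h' (h hab)
  le_antisymm _ _ h h' := ext' fun a b => ⟨fun hab => h hab, fun hab => h' hab⟩

instance : OrderTop (LatticeCongruence L) where
  top := ⟨fun _ _ => True, ⟨fun _ => trivial, fun _ => trivial, fun _ _ => trivial⟩,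
    fun _ _ => trivial, fun _ _ => trivial⟩
  le_top _ _ _ _ := trivial

instance : OrderBot (LatticeCongruence L) where
  bot := ⟨Eq, eq_equivalence, fun h h' => by rw [h, h'], fun h h' => by rw [h, h']⟩
  bot_le _ _ _ h := h ▸ (Equivalence.refl (iseqv _) _)

instance : InfSet (LatticeCongruence L) where
  sInf S :=
    ⟨fun a b => ∀ θ ∈ S, θ.r a b,
     ⟨fun _ θ _ => θ.iseqv.refl _,
      fun h θ hθ => θ.iseqv.symm (h θ hθ),
      fun h h' θ hθ => θ.iseqv.trans (h θ hθ) (h' θ hθ)⟩,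
     fun h h' θ hθ => θ.sup_compat (h θ hθ) (h' θ hθ),
     fun h h' θ hθ => θ.inf_compat (h θ hθ) (h' θ hθ)⟩

/-- The principal congruence generated by collapsing the pair `(a, b)`. -/
def conPair (a b : L) : LatticeCongruence L := sInf {θ : LatticeCongruence L | θ.r a b}

end LatticeCongruence

/-!
If SD∧ failed at `x, y, z`, an element `p` covering `m = x ⊓ y` below `x ⊓ (y ⊔ z)` would split:
`m ≤ y, z` but `p ≰ y, z`, while `p ≤ y ⊔ z`. Replace `z` by a minimal `z₀ ≥ m` with `p ≤ y ⊔ z₀` and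
pick `m ≤ z' ⋖ z₀`. If `z' ≠ m`, semimodularity gives `z' ⋖ z' ⊔ p`, and `z' ⊔ p` splits the same way
over `y ⊔ z'` and `z₀`, with the strictly larger bottom `z'`. Descending, we reach `m ⋖ z` and
(symmetrically) `m ⋖ y`. Then semimodularity forces `y ⊔ p = y ⊔ z = z ⊔ p`, and `p, y, z` form an `M₃`.
-/

section

variable {L : Type*} [Lattice L]

theorem CovBy.inf_eq_of_le_of_not_le {m p y : L} (h : m ⋖ p) (hm : m ≤ y) (hp : ¬ p ≤ y) :
    p ⊓ y = m :=
  (h.eq_or_eq (le_inf h.le hm) inf_le_left).resolve_right fun he => hp (inf_eq_left.mp he)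

theorem IsSemimodular.covBy_sup_of_covBy (hsemi : IsSemimodular L) {m p b : L} (h : m ⋖ p)
    (hm : m ≤ b) (hp : ¬ p ≤ b) : b ⋖ b ⊔ p := by
  have hcov := hsemi p b (by rwa [h.inf_eq_of_le_of_not_le hm hp])
  rwa [sup_comm] at hcov

structure IsSplitCover (m p y z : L) : Prop where
  covBy : m ⋖ p
  le_left : m ≤ y
  le_right : m ≤ z
  not_le_left : ¬ p ≤ y
  not_le_right : ¬ p ≤ z
  le_sup : p ≤ y ⊔ z

namespace IsSplitCover

variable {m p y z : L}

theorem symm (h : IsSplitCover m p y z) : IsSplitCover m p z y :=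
  ⟨h.covBy, h.le_right, h.le_left, h.not_le_right, h.not_le_left, sup_comm y z ▸ h.le_sup⟩

theorem of_inf_eq {x : L} (h : x ⊓ y = x ⊓ z) (hp : x ⊓ y ⋖ p) (hpx : p ≤ x ⊓ (y ⊔ z)) :
    IsSplitCover (x ⊓ y) p y z where
  covBy := hp
  le_left := inf_le_right
  le_right := h ▸ inf_le_right
  not_le_left hpy := hp.lt.not_ge (le_inf (hpx.trans inf_le_left) hpy)
  not_le_right hpz := hp.lt.not_ge (h ▸ le_inf (hpx.trans inf_le_left) hpz)
  le_sup := hpx.trans inf_le_right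

theorem not_le_right_of_le_left (h : IsSplitCover m p y z) : ¬ z ≤ y :=
  fun hzy => h.not_le_left (h.le_sup.trans (sup_le le_rfl hzy))

theorem lt_right (h : IsSplitCover m p y z) : m < z :=
  h.le_right.lt_of_ne fun hmz => h.not_le_right_of_le_left (hmz ▸ h.le_left)

theorem sup_left_eq (hsemi : IsSemimodular L) (h : IsSplitCover m p y z) (hz : m ⋖ z) :
    y ⊔ p = y ⊔ z := by
  have hcov : y ⋖ y ⊔ z := hsemi.covBy_sup_of_covBy hz h.le_left h.not_le_right_of_le_left
  exact (hcov.eq_or_eq le_sup_left (sup_le le_sup_left h.le_sup)).resolve_left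
    fun he => h.not_le_left (sup_eq_left.mp he)

theorem hasM3Sublattice (hsemi : IsSemimodular L) (h : IsSplitCover m p y z) (hy : m ⋖ y)
    (hz : m ⋖ z) : HasM3Sublattice L := by
  have hpy := h.covBy.inf_eq_of_le_of_not_le h.le_left h.not_le_left
  have hpz := h.covBy.inf_eq_of_le_of_not_le h.le_right h.not_le_right
  have hzy := hz.inf_eq_of_le_of_not_le h.le_left h.not_le_right_of_le_left
  have hyp := h.sup_left_eq hsemi hz
  have hzp := h.symm.sup_left_eq hsemi hy
  refine ⟨p, y, z, fun e => h.not_le_left e.le, fun e => h.not_le_right e.le,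
    fun e => h.not_le_right_of_le_left e.ge, hpy.trans hpz.symm, ?_, ?_, ?_⟩
  · rw [hpz, inf_comm, hzy]
  · rw [sup_comm, hyp, sup_comm p z, hzp, sup_comm]
  · rw [sup_comm, hzp, sup_comm]

theorem lift_bottom (hsemi : IsSemimodular L) (h : IsSplitCover m p y z) {z' : L} (hmz' : m ≤ z')
    (hz' : z' ≤ z) (hp : ¬ p ≤ y ⊔ z') : IsSplitCover z' (z' ⊔ p) (y ⊔ z') z where
  covBy := hsemi.covBy_sup_of_covBy h.covBy hmz' fun hpz' => h.not_le_right (hpz'.trans hz')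
  le_left := le_sup_right
  le_right := hz'
  not_le_left hle := hp (le_sup_right.trans hle)
  not_le_right hle := h.not_le_right (le_sup_right.trans hle)
  le_sup := sup_le (hz'.trans le_sup_right) (h.le_sup.trans (sup_le_sup_right le_sup_left z))

theorem exists_covBy_right_or_lift_bottom [WellFoundedLT L] [WellFoundedGT L]
    (hsemi : IsSemimodular L) (h : IsSplitCover m p y z) :
    (∃ z₀, m ⋖ z₀ ∧ IsSplitCover m p y z₀) ∨ ∃ m' p' y' z', m < m' ∧ IsSplitCover m' p' y' z' := by
  obtain ⟨z₀, hz₀z, hmin⟩ := exists_minimal_le_of_wellFoundedLT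
    (fun w => m ≤ w ∧ p ≤ y ⊔ w) z ⟨h.le_right, h.le_sup⟩
  have h₀ : IsSplitCover m p y z₀ :=
    ⟨h.covBy, h.le_left, hmin.prop.1, h.not_le_left, fun hp => h.not_le_right (hp.trans hz₀z),
      hmin.prop.2⟩
  obtain ⟨z', hmz', hz'⟩ := exists_le_covBy_of_lt h₀.lt_right
  rcases hmz'.eq_or_lt with rfl | hlt
  · exact .inl ⟨z₀, hz', h₀⟩
  · exact .inr ⟨z', _, _, _, hlt, h₀.lift_bottom hsemi hmz' hz'.le
      fun hp => hz'.lt.not_ge (hmin.le_of_le ⟨hmz', hp⟩ hz'.le)⟩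

end IsSplitCover

theorem not_isSplitCover [WellFoundedLT L] [WellFoundedGT L] (hsemi : IsSemimodular L)
    (hslim : ¬ HasM3Sublattice L) (m p y z : L) : ¬ IsSplitCover m p y z := by
  induction m using WellFoundedGT.induction generalizing p y z with
  | _ m ih =>
  intro h
  obtain ⟨z₀, hz₀, h₀⟩ | ⟨m', p', y', z', hm', h'⟩ := h.exists_covBy_right_or_lift_bottom hsemi
  · obtain ⟨y₀, hy₀, h₀₀⟩ | ⟨m', p', y', z', hm', h'⟩ :=
      h₀.symm.exists_covBy_right_or_lift_bottom hsemi
    · exact hslim (h₀₀.symm.hasM3Sublattice hsemi hy₀ hz₀)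
    · exact ih m' hm' p' y' z' h'
  · exact ih m' hm' p' y' z' h'

end

theorem sps_meet_semidistributive_general {L : Type*} [Lattice L] [Fintype L]
    (hsemi : IsSemimodular L) (hslim : ¬ HasM3Sublattice L) :
    ∀ x y z : L, x ⊓ y = x ⊓ z → x ⊓ y = x ⊓ (y ⊔ z) := by
  intro x y z h
  have hle : x ⊓ y ≤ x ⊓ (y ⊔ z) := le_inf inf_le_left (inf_le_right.trans le_sup_left)
  refine hle.eq_of_not_lt fun hlt => ?_
  obtain ⟨p, hp, hpx⟩ := exists_covBy_le_of_lt hlt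
  exact not_isSplitCover hsemi hslim _ _ _ _ (.of_inf_eq h hp hpx)

/-- Every slim planar semimodular lattice is meet-semidistributive. -/
theorem sps_meet_semidistributive {L : Type*} [Lattice L] [Fintype L]
    (hplanar : IsPlanarLattice L) (hsemi : IsSemimodular L)
    (hslim : ¬ HasM3Sublattice L) :
    ∀ x y z : L, x ⊓ y = x ⊓ z → x ⊓ y = x ⊓ (y ⊔ z) :=
  sps_meet_semidistributive_general hsemi hslim
end

section
/- Let L be a finite lattice, α a congruence of L, and let A = [0_A, 1_A] and B = [0_B, 1_B] be congruence classes of α with A ≺ B in the quotient lattice L/α. Then for every x ∈ A there is a smallest element x^B of B with x ≤ x^B, namely x ∨ 0_B, and for every y ∈ B there is a greatest element y_A of A with y_A ≤ y, namely y ∧ 1_A. Moreover, (x^B)_A ≺ x^B in L for every x ∈ A. -/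
/-- A lattice congruence. -/
structure LatticeCong (L : Type*) [Lattice L] where
  r : L → L → Prop
  iseqv : Equivalence r
  sup_compat : ∀ {a b c d : L}, r a b → r c d → r (a ⊔ c) (b ⊔ d)
  inf_compat : ∀ {a b c d : L}, r a b → r c d → r (a ⊓ c) (b ⊓ d)

namespace LatticeCong

variable {L : Type*} [Lattice L]

def toSetoid (α : LatticeCong L) : Setoid L := ⟨α.r, α.iseqv⟩

/-- The quotient lattice `L/α`. -/
def Quot (α : LatticeCong L) : Type _ := Quotient α.toSetoid

/-- The quotient map. -/
def mkQ (α : LatticeCong L) (x : L) : α.Quot := Quotient.mk α.toSetoid x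

instance (α : LatticeCong L) : Max α.Quot :=
  ⟨Quotient.map₂ (· ⊔ ·) fun _ _ h _ _ h' => α.sup_compat h h'⟩

instance (α : LatticeCong L) : Min α.Quot :=
  ⟨Quotient.map₂ (· ⊓ ·) fun _ _ h _ _ h' => α.inf_compat h h'⟩

@[simp] theorem mkQ_sup (α : LatticeCong L) (x y : L) :
    α.mkQ x ⊔ α.mkQ y = α.mkQ (x ⊔ y) := rfl

@[simp] theorem mkQ_inf (α : LatticeCong L) (x y : L) :
    α.mkQ x ⊓ α.mkQ y = α.mkQ (x ⊓ y) := rfl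

instance (α : LatticeCong L) : Lattice α.Quot :=
  Lattice.mk'
    (fun a b => Quotient.inductionOn₂ a b fun x y => congrArg _ (sup_comm x y))
    (fun a b c => Quotient.inductionOn₃ a b c fun x y z => congrArg _ (sup_assoc x y z))
    (fun a b => Quotient.inductionOn₂ a b fun x y => congrArg _ (inf_comm x y))
    (fun a b c => Quotient.inductionOn₃ a b c fun x y z => congrArg _ (inf_assoc x y z))
    (fun a b => Quotient.inductionOn₂ a b fun x y => congrArg _ (sup_inf_self (a := x) (b := y)))
    (fun a b => Quotient.inductionOn₂ a b fun x y => congrArg _ (inf_sup_self (a := x) (b := y)))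

theorem ext' {α β : LatticeCong L} (h : ∀ a b, α.r a b ↔ β.r a b) : α = β := by
  have hr : α.r = β.r := funext fun a => funext fun b => propext (h a b)
  cases α; cases β; cases hr; rfl

instance : PartialOrder (LatticeCong L) where
  le α β := ∀ ⦃a b : L⦄, α.r a b → β.r a b
  le_refl _ _ _ h := h
  le_trans _ _ _ h h' _ _ hab := h' (h hab)
  le_antisymm _ _ h h' := ext' fun a b => ⟨fun hab => h hab, fun hab => h' hab⟩

instance : OrderTop (LatticeCong L) where
  top := ⟨fun _ _ => True, ⟨fun _ => trivial, fun _ => trivial, fun _ _ => trivial⟩,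
    fun _ _ => trivial, fun _ _ => trivial⟩
  le_top _ _ _ _ := trivial

instance : OrderBot (LatticeCong L) where
  bot := ⟨Eq, eq_equivalence, fun h h' => by rw [h, h'], fun h h' => by rw [h, h']⟩
  bot_le _ _ _ h := h ▸ (Equivalence.refl (iseqv _) _)

instance : InfSet (LatticeCong L) where
  sInf S :=
    ⟨fun a b => ∀ θ ∈ S, θ.r a b,
     ⟨fun _ θ _ => θ.iseqv.refl _,
      fun h θ hθ => θ.iseqv.symm (h θ hθ),
      fun h h' θ hθ => θ.iseqv.trans (h θ hθ) (h' θ hθ)⟩,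
     fun h h' θ hθ => θ.sup_compat (h θ hθ) (h' θ hθ),
     fun h h' θ hθ => θ.inf_compat (h θ hθ) (h' θ hθ)⟩

/-- The principal congruence generated by collapsing the pair `(a, b)`. -/
def conPair (a b : L) : LatticeCong L := sInf {θ : LatticeCong L | θ.r a b}

end LatticeCong

namespace LatticeCong

variable {L : Type*} [Lattice L] (α : LatticeCong L)

theorem mkQ_eq_mkQ_iff {x y : L} : α.mkQ x = α.mkQ y ↔ α.r x y :=
  ⟨Quotient.exact, fun h => Quotient.sound h⟩

theorem mkQ_monotone : Monotone α.mkQ := fun _ _ h =>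
  sup_eq_right.mp (congrArg α.mkQ (sup_eq_right.mpr h))

variable {α} {o t : L}

theorem mem_Icc_iff_mkQ_eq (hC : Set.Icc o t = {x : L | α.r x o}) {z : L} :
    z ∈ Set.Icc o t ↔ α.mkQ z = α.mkQ o := by
  rw [hC, mkQ_eq_mkQ_iff]; rfl

theorem isLeast_sup_of_mkQ_le (hC : Set.Icc o t = {x : L | α.r x o}) {x : L}
    (hx : α.mkQ x ≤ α.mkQ o) : IsLeast {b : L | b ∈ Set.Icc o t ∧ x ≤ b} (x ⊔ o) := by
  have hxo : α.mkQ (x ⊔ o) = α.mkQ o := sup_eq_right.mpr hx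
  refine ⟨⟨(mem_Icc_iff_mkQ_eq hC).mpr hxo, le_sup_left⟩, ?_⟩
  rintro b ⟨hb, hxb⟩
  exact sup_le hxb hb.1

theorem isGreatest_inf_of_le_mkQ (hC : Set.Icc o t = {x : L | α.r x o}) {y : L}
    (hy : α.mkQ o ≤ α.mkQ y) : IsGreatest {a : L | a ∈ Set.Icc o t ∧ a ≤ y} (y ⊓ t) := by
  have hot : o ∈ Set.Icc o t := (mem_Icc_iff_mkQ_eq hC).mpr rfl
  have hto : α.mkQ t = α.mkQ o := (mem_Icc_iff_mkQ_eq hC).mp (Set.right_mem_Icc.mpr hot.2)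
  have hyo : α.mkQ (y ⊓ t) = α.mkQ o := by rw [← mkQ_inf, hto]; exact inf_eq_right.mpr hy
  refine ⟨⟨(mem_Icc_iff_mkQ_eq hC).mpr hyo, inf_le_left⟩, ?_⟩
  rintro a ⟨ha, hay⟩
  exact le_inf hay ha.2

theorem inf_covBy_of_mkQ_covBy {oA tA oB tB x : L}
    (hA : Set.Icc oA tA = {x : L | α.r x oA}) (hB : Set.Icc oB tB = {x : L | α.r x oB})
    (hcov : α.mkQ oA ⋖ α.mkQ oB) (hx : x ∈ Set.Icc oA tA) :
    (x ⊔ oB) ⊓ tA ⋖ x ⊔ oB := by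
  set b := x ⊔ oB
  set a := b ⊓ tA
  have hbB : α.mkQ b = α.mkQ oB := (mem_Icc_iff_mkQ_eq hB).mp
    (isLeast_sup_of_mkQ_le hB ((mem_Icc_iff_mkQ_eq hA).mp hx ▸ hcov.le)).1.1
  have haA : α.mkQ a = α.mkQ oA := (mem_Icc_iff_mkQ_eq hA).mp
    (isGreatest_inf_of_le_mkQ hA (hbB ▸ hcov.le)).1.1
  have hcov' : α.mkQ a ⋖ α.mkQ b := by rwa [haA, hbB]
  refine ⟨inf_le_left.lt_of_ne fun h => hcov'.ne (congrArg α.mkQ h), fun z haz hzb => ?_⟩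
  -- `z` lies in one of the two adjacent classes; either way it is squeezed onto `a` or `b`.
  rcases hcov'.eq_or_eq (mkQ_monotone α haz.le) (mkQ_monotone α hzb.le) with hzA | hzB
  · have hz : z ∈ Set.Icc oA tA := (mem_Icc_iff_mkQ_eq hA).mpr (hzA.trans haA)
    exact haz.not_ge (le_inf hzb.le hz.2)
  · have hz : z ∈ Set.Icc oB tB := (mem_Icc_iff_mkQ_eq hB).mpr (hzB.trans hbB)
    have hxa : x ≤ a := le_inf le_sup_left hx.2
    exact hzb.not_ge (sup_le (hxa.trans haz.le) hz.1)

end LatticeCong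

open LatticeCong

theorem congruence_class_interface_general {L : Type*} [Lattice L]
    (α : LatticeCong L) (oA tA oB tB : L)
    (hA : Set.Icc oA tA = {x : L | α.r x oA})
    (hB : Set.Icc oB tB = {x : L | α.r x oB})
    (hcov : α.mkQ oA ⋖ α.mkQ oB) :
    (∀ x ∈ Set.Icc oA tA, IsLeast {b : L | b ∈ Set.Icc oB tB ∧ x ≤ b} (x ⊔ oB)) ∧
    (∀ y ∈ Set.Icc oB tB, IsGreatest {a : L | a ∈ Set.Icc oA tA ∧ a ≤ y} (y ⊓ tA)) ∧
    (∀ x ∈ Set.Icc oA tA, ((x ⊔ oB) ⊓ tA) ⋖ (x ⊔ oB)) := by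
  refine ⟨fun x hx => ?_, fun y hy => ?_, fun x hx => inf_covBy_of_mkQ_covBy hA hB hcov hx⟩
  · exact isLeast_sup_of_mkQ_le hB ((mem_Icc_iff_mkQ_eq hA).mp hx ▸ hcov.le)
  · exact isGreatest_inf_of_le_mkQ hA ((mem_Icc_iff_mkQ_eq hB).mp hy ▸ hcov.le)

/-- Interface of adjacent congruence classes `A = [oA, tA] ≺ B = [oB, tB]` in `L/α`. -/
theorem congruence_class_interface {L : Type*} [Lattice L] [Fintype L]
    (α : LatticeCong L) (oA tA oB tB : L)
    (hA : Set.Icc oA tA = {x : L | α.r x oA})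
    (hB : Set.Icc oB tB = {x : L | α.r x oB})
    (hcov : α.mkQ oA ⋖ α.mkQ oB) :
    (∀ x ∈ Set.Icc oA tA, IsLeast {b : L | b ∈ Set.Icc oB tB ∧ x ≤ b} (x ⊔ oB)) ∧
    (∀ y ∈ Set.Icc oB tB, IsGreatest {a : L | a ∈ Set.Icc oA tA ∧ a ≤ y} (y ⊓ tA)) ∧
    (∀ x ∈ Set.Icc oA tA, ((x ⊔ oB) ⊓ tA) ⋖ (x ⊔ oB)) :=
  congruence_class_interface_general α oA tA oB tB hA hB hcov
end

section
/- Let L be a finite semimodular lattice, α a congruence of L, and A = [0_A, 1_A], B = [0_B, 1_B] congruence classes with A ≺ B in L/α and with 1_A and 0_B incomparable. Set a_0 = 1_A ∧ 0_B, and let a_0 = a_0 ≺ a_1 ≺ ... ≺ a_t = 1_A be a maximal chain in [a_0, 1_A]. Then setting b_i = a_i ∨ 0_B, we have a_i ≺ b_i for all i, b_0 ≺ b_1 ≺ ... ≺ b_t, b_t = 1_A ∨ 0_B, and the maps x ↦ x ∨ 0_B and y ↦ y ∧ 1_A are mutually inverse isomorphisms between the chains {a_0,...,a_t} and {b_0,...,b_t}.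 -/
/-!
The bottom rung comes from the quotient: `1_A ∧ 0_B` lies in the class `A`, so any element strictly
between it and `0_B` would lie in `A` or `B` (as `A ≺ B`), which the interval shape of the classes
forbids. Semimodularity then carries a cover `a ⋖ a ∨ z` up a chain below `u` with `z ≰ u`: since
`(a ∨ z) ∧ u = a`, the next element `a'` of the chain meets `a ∨ z` in `a`, and semimodularity
applied to the square `a, a', a ∨ z, a' ∨ z` yields both `a' ⋖ a' ∨ z` and `a ∨ z ⋖ a' ∨ z`.
-/

theorem IsSemimodular.isUpperModularLattice {L : Type*} [Lattice L] (h : IsSemimodular L) :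
    IsUpperModularLattice L :=
  ⟨h _ _⟩

section Lattice

variable {L : Type*} [Lattice L] {x y z u : L}

theorem CovBy.inf_eq_of_not_le (hxy : x ⋖ y) (hxu : x ≤ u) (hyu : ¬ y ≤ u) : y ⊓ u = x :=
  (hxy.eq_or_eq (le_inf hxy.le hxu) inf_le_left).resolve_right fun h => hyu (inf_eq_left.mp h)

theorem CovBy.not_le_sup_of_le (hxy : x ⋖ y) (hxz : x ⋖ x ⊔ z) (hyu : y ≤ u) (hzu : ¬ z ≤ u) :
    ¬ y ≤ x ⊔ z := fun hy => by
  have hmeet : (x ⊔ z) ⊓ u = x :=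
    hxz.inf_eq_of_not_le (hxy.le.trans hyu) fun h => hzu (le_sup_right.trans h)
  exact hxy.lt.not_ge (hmeet ▸ le_inf hy hyu)

end Lattice

section UpperModular

variable {L : Type*} [Lattice L] [IsUpperModularLattice L] {x y z u : L}

theorem CovBy.sup_covBy_sup_of_not_le (hxy : x ⋖ y) (hy : ¬ y ≤ x ⊔ z) :
    x ⊔ z ⋖ y ⊔ z := by
  have hmeet : y ⊓ (x ⊔ z) = x := hxy.inf_eq_of_not_le le_sup_left hy
  have hcov : x ⊔ z ⋖ y ⊔ (x ⊔ z) := covBy_sup_of_inf_covBy_left (by rwa [hmeet])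
  rwa [← sup_assoc, sup_eq_left.mpr hxy.le] at hcov

theorem CovBy.covBy_sup_of_not_le (hxy : x ⋖ y) (hxz : x ⋖ x ⊔ z) (hy : ¬ y ≤ x ⊔ z) :
    y ⋖ y ⊔ z := by
  have hmeet : (x ⊔ z) ⊓ y = x := inf_comm y _ ▸ hxy.inf_eq_of_not_le le_sup_left hy
  have hcov : y ⋖ x ⊔ z ⊔ y := covBy_sup_of_inf_covBy_left (by rwa [hmeet])
  rwa [sup_right_comm, sup_eq_right.mpr hxy.le] at hcov

variable {t : ℕ} {a : Fin (t + 1) → L}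

theorem covBy_sup_of_chain (hchain : ∀ i : Fin t, a i.castSucc ⋖ a i.succ) (hle : ∀ i, a i ≤ u)
    (hzu : ¬ z ≤ u) (h0 : a 0 ⋖ a 0 ⊔ z) : ∀ i, a i ⋖ a i ⊔ z :=
  Fin.induction h0 fun i ih =>
    (hchain i).covBy_sup_of_not_le ih ((hchain i).not_le_sup_of_le ih (hle _) hzu)

theorem sup_covBy_sup_of_chain (hchain : ∀ i : Fin t, a i.castSucc ⋖ a i.succ)
    (hle : ∀ i, a i ≤ u) (hzu : ¬ z ≤ u) (hcov : ∀ i, a i ⋖ a i ⊔ z) (i : Fin t) :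
    a i.castSucc ⊔ z ⋖ a i.succ ⊔ z :=
  (hchain i).sup_covBy_sup_of_not_le ((hchain i).not_le_sup_of_le (hcov _) (hle _) hzu)

end UpperModular

namespace LatticeCon'

variable {L : Type*} [Lattice L] (α : LatticeCon' L) {o o' t t' x : L}

theorem mkQ_mono : Monotone α.mkQ := fun x y h =>
  sup_eq_right.mp (congrArg α.mkQ (sup_eq_right.mpr h) : α.mkQ (x ⊔ y) = α.mkQ y)

variable {α}

theorem mem_Icc_of_r (hclass : Set.Icc o t = {x : L | α.r x o}) (hx : α.r x o) :
    x ∈ Set.Icc o t :=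
  hclass ▸ hx

theorem r_top_of_Icc_eq (hclass : Set.Icc o t = {x : L | α.r x o}) : α.r t o := by
  have ho : o ∈ Set.Icc o t := mem_Icc_of_r hclass (α.iseqv.refl o)
  exact (hclass ▸ Set.right_mem_Icc.mpr ho.2 : t ∈ {x : L | α.r x o})

theorem inf_covBy_of_mkQ_covBy (hA : Set.Icc o t = {x : L | α.r x o})
    (hB : Set.Icc o' t' = {x : L | α.r x o'}) (hcov : α.mkQ o ⋖ α.mkQ o') (hnle : ¬ o' ≤ t) :
    t ⊓ o' ⋖ o' := by
  have htop : α.mkQ t = α.mkQ o := Quotient.sound (r_top_of_Icc_eq hA)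
  have hbot : α.mkQ o ≤ α.mkQ (t ⊓ o') := by
    rw [← mkQ_inf, htop]
    exact le_inf le_rfl hcov.le
  refine ⟨inf_lt_right.mpr hnle, fun c hc₁ hc₂ => ?_⟩
  rcases hcov.eq_or_eq (hbot.trans (α.mkQ_mono hc₁.le)) (α.mkQ_mono hc₂.le) with h | h
  · exact hc₁.not_ge (le_inf (mem_Icc_of_r hA (Quotient.exact h)).2 hc₂.le)
  · exact hc₂.not_ge (mem_Icc_of_r hB (Quotient.exact h)).1

end LatticeCon'

theorem ladder_between_classes_general {L : Type*} [Lattice L]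
    (hsemi : IsSemimodular L)
    (α : LatticeCon' L) (oA tA oB tB : L)
    (hA : Set.Icc oA tA = {x : L | α.r x oA})
    (hB : Set.Icc oB tB = {x : L | α.r x oB})
    (hcov : α.mkQ oA ⋖ α.mkQ oB)
    (hincomp : ¬ tA ≤ oB ∧ ¬ oB ≤ tA)
    (t : ℕ) (a : Fin (t + 1) → L)
    (ha0 : a 0 = tA ⊓ oB) (hat : a (Fin.last t) = tA)
    (hchain : ∀ i : Fin t, a i.castSucc ⋖ a i.succ) :
    (∀ i, a i ⋖ a i ⊔ oB) ∧
    (∀ i : Fin t, (a i.castSucc ⊔ oB) ⋖ (a i.succ ⊔ oB)) ∧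
    (a (Fin.last t) ⊔ oB = tA ⊔ oB) ∧
    (∀ i, (a i ⊔ oB) ⊓ tA = a i) := by
  have := hsemi.isUpperModularLattice
  have hle : ∀ i, a i ≤ tA := Fin.reverseInduction hat.le fun i ih => (hchain i).le.trans ih
  have hbase : a 0 ⋖ a 0 ⊔ oB := by
    rw [ha0, sup_eq_right.mpr inf_le_right]
    exact LatticeCon'.inf_covBy_of_mkQ_covBy hA hB hcov hincomp.2
  have hrungs := covBy_sup_of_chain hchain hle hincomp.2 hbase
  exact ⟨hrungs, sup_covBy_sup_of_chain hchain hle hincomp.2 hrungs, by rw [hat],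
    fun i => (hrungs i).inf_eq_of_not_le (hle i) fun h => hincomp.2 (le_sup_right.trans h)⟩

/-- The ladder between adjacent congruence classes in a finite semimodular lattice. -/
theorem ladder_between_classes {L : Type*} [Lattice L] [Fintype L]
    (hsemi : IsSemimodular L)
    (α : LatticeCon' L) (oA tA oB tB : L)
    (hA : Set.Icc oA tA = {x : L | α.r x oA})
    (hB : Set.Icc oB tB = {x : L | α.r x oB})
    (hcov : α.mkQ oA ⋖ α.mkQ oB)
    (hincomp : ¬ tA ≤ oB ∧ ¬ oB ≤ tA)
    (t : ℕ) (a : Fin (t + 1) → L)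
    (ha0 : a 0 = tA ⊓ oB) (hat : a (Fin.last t) = tA)
    (hchain : ∀ i : Fin t, a i.castSucc ⋖ a i.succ) :
    (∀ i, a i ⋖ a i ⊔ oB) ∧
    (∀ i : Fin t, (a i.castSucc ⊔ oB) ⋖ (a i.succ ⊔ oB)) ∧
    (a (Fin.last t) ⊔ oB = tA ⊔ oB) ∧
    (∀ i, (a i ⊔ oB) ⊓ tA = a i) :=
  ladder_between_classes_general hsemi α oA tA oB tB hA hB hcov hincomp t a ha0 hat hchain
end

section
/- Let L be a finite lattice, α a congruence of L, and A ≺ B adjacent congruence classes of α in L/α with 1_A and 0_B incomparable. Then 1_A ∧ 0_B ≺ 0_B in L. -/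
/-- A lattice congruence. -/
structure LatticeCongr (L : Type*) [Lattice L] where
  r : L → L → Prop
  iseqv : Equivalence r
  sup_compat : ∀ {a b c d : L}, r a b → r c d → r (a ⊔ c) (b ⊔ d)
  inf_compat : ∀ {a b c d : L}, r a b → r c d → r (a ⊓ c) (b ⊓ d)

namespace LatticeCongr

variable {L : Type*} [Lattice L]

def toSetoid (α : LatticeCongr L) : Setoid L := ⟨α.r, α.iseqv⟩

/-- The quotient lattice `L/α`. -/
def Quot (α : LatticeCongr L) : Type _ := Quotient α.toSetoid

/-- The quotient map. -/
def mkQ (α : LatticeCongr L) (x : L) : α.Quot := Quotient.mk α.toSetoid x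

instance (α : LatticeCongr L) : Max α.Quot :=
  ⟨Quotient.map₂ (· ⊔ ·) fun _ _ h _ _ h' => α.sup_compat h h'⟩

instance (α : LatticeCongr L) : Min α.Quot :=
  ⟨Quotient.map₂ (· ⊓ ·) fun _ _ h _ _ h' => α.inf_compat h h'⟩

@[simp] theorem mkQ_sup (α : LatticeCongr L) (x y : L) :
    α.mkQ x ⊔ α.mkQ y = α.mkQ (x ⊔ y) := rfl

@[simp] theorem mkQ_inf (α : LatticeCongr L) (x y : L) :
    α.mkQ x ⊓ α.mkQ y = α.mkQ (x ⊓ y) := rfl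

instance (α : LatticeCongr L) : Lattice α.Quot :=
  Lattice.mk'
    (fun a b => Quotient.inductionOn₂ a b fun x y => congrArg _ (sup_comm x y))
    (fun a b c => Quotient.inductionOn₃ a b c fun x y z => congrArg _ (sup_assoc x y z))
    (fun a b => Quotient.inductionOn₂ a b fun x y => congrArg _ (inf_comm x y))
    (fun a b c => Quotient.inductionOn₃ a b c fun x y z => congrArg _ (inf_assoc x y z))
    (fun a b => Quotient.inductionOn₂ a b fun x y => congrArg _ (sup_inf_self (a := x) (b := y)))
    (fun a b => Quotient.inductionOn₂ a b fun x y => congrArg _ (inf_sup_self (a := x) (b := y)))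

theorem ext' {α β : LatticeCongr L} (h : ∀ a b, α.r a b ↔ β.r a b) : α = β := by
  have hr : α.r = β.r := funext fun a => funext fun b => propext (h a b)
  cases α; cases β; cases hr; rfl

instance : PartialOrder (LatticeCongr L) where
  le α β := ∀ ⦃a b : L⦄, α.r a b → β.r a b
  le_refl _ _ _ h := h
  le_trans _ _ _ h h' _ _ hab := h' (h hab)
  le_antisymm _ _ h h' := ext' fun a b => ⟨fun hab => h hab, fun hab => h' hab⟩

instance : OrderTop (LatticeCongr L) where
  top := ⟨fun _ _ => True, ⟨fun _ => trivial, fun _ => trivial, fun _ _ => trivial⟩,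
    fun _ _ => trivial, fun _ _ => trivial⟩
  le_top _ _ _ _ := trivial

instance : OrderBot (LatticeCongr L) where
  bot := ⟨Eq, eq_equivalence, fun h h' => by rw [h, h'], fun h h' => by rw [h, h']⟩
  bot_le _ _ _ h := h ▸ (Equivalence.refl (iseqv _) _)

instance : InfSet (LatticeCongr L) where
  sInf S :=
    ⟨fun a b => ∀ θ ∈ S, θ.r a b,
     ⟨fun _ θ _ => θ.iseqv.refl _,
      fun h θ hθ => θ.iseqv.symm (h θ hθ),
      fun h h' θ hθ => θ.iseqv.trans (h θ hθ) (h' θ hθ)⟩,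
     fun h h' θ hθ => θ.sup_compat (h θ hθ) (h' θ hθ),
     fun h h' θ hθ => θ.inf_compat (h θ hθ) (h' θ hθ)⟩

/-- The principal congruence generated by collapsing the pair `(a, b)`. -/
def conPair (a b : L) : LatticeCongr L := sInf {θ : LatticeCongr L | θ.r a b}

end LatticeCongr

/-! Since `1_A ⊓ 0_B ≡ 1_A` lies in the class `A`, every `z` strictly between `1_A ⊓ 0_B` and
`0_B` has class `A` or `B` by the covering `A ⋖ B`. Class `A` forces `z ≤ 1_A`, hence
`z ≤ 1_A ⊓ 0_B`; class `B` forces `0_B ≤ z`. Both contradict the position of `z`. -/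

namespace LatticeCongr

variable {L : Type*} [Lattice L] (α : LatticeCongr L)

theorem mkQ_monotone : Monotone α.mkQ := fun _ _ hxy =>
  sup_eq_right.1 <| congrArg α.mkQ (sup_eq_right.2 hxy)

theorem mkQ_eq_mkQ_iff {x y : L} : α.mkQ x = α.mkQ y ↔ α.r x y :=
  Quotient.eq

end LatticeCongr

theorem covBy_of_monotone_of_fibres {P Q : Type*} [PartialOrder P] [PartialOrder Q]
    {f : P → Q} (hf : Monotone f) {m b : P} (hmb : m < b) (hcov : f m ⋖ f b)
    (hm : ∀ z, z < b → f z = f m → z ≤ m) (hb : ∀ z, f z = f b → b ≤ z) : m ⋖ b := by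
  refine ⟨hmb, fun z hmz hzb => ?_⟩
  rcases hcov.eq_or_eq (hf hmz.le) (hf hzb.le) with hz | hz
  · exact hmz.not_ge (hm z hzb hz)
  · exact hzb.not_ge (hb z hz)

theorem meet_covby_bottom_of_adjacent_classes_general {L : Type*} [Lattice L]
    (α : LatticeCongr L) (oA tA oB tB : L)
    (hA : Set.Icc oA tA = {x : L | α.r x oA})
    (hB : Set.Icc oB tB = {x : L | α.r x oB})
    (hcov : α.mkQ oA ⋖ α.mkQ oB)
    (hincomp : ¬ tA ≤ oB ∧ ¬ oB ≤ tA) :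
    tA ⊓ oB ⋖ oB := by
  have hAmem := fun x => Set.ext_iff.1 hA x
  have hBmem := fun x => Set.ext_iff.1 hB x
  have hoA_le_tA : oA ≤ tA := ((hAmem oA).2 (α.iseqv.refl oA)).2
  have htA : α.mkQ tA = α.mkQ oA := (α.mkQ_eq_mkQ_iff).2 <| (hAmem tA).1 ⟨hoA_le_tA, le_rfl⟩
  have hmeet : α.mkQ (tA ⊓ oB) = α.mkQ oA := by
    rw [← LatticeCongr.mkQ_inf, htA]
    exact inf_eq_left.2 hcov.le
  have hlt : tA ⊓ oB < oB := inf_le_right.lt_of_ne fun h => hincomp.2 (h ▸ inf_le_left)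
  refine covBy_of_monotone_of_fibres α.mkQ_monotone hlt (hmeet ▸ hcov) ?_ ?_
  · intro z hzB hz
    rw [hmeet, α.mkQ_eq_mkQ_iff] at hz
    exact le_inf ((hAmem z).2 hz).2 hzB.le
  · intro z hz
    exact ((hBmem z).2 ((α.mkQ_eq_mkQ_iff).1 hz)).1

/-- For adjacent congruence classes with `1_A` and `0_B` incomparable,
`1_A ⊓ 0_B ⋖ 0_B`. -/
theorem meet_covby_bottom_of_adjacent_classes {L : Type*} [Lattice L] [Fintype L]
    (α : LatticeCongr L) (oA tA oB tB : L)
    (hA : Set.Icc oA tA = {x : L | α.r x oA})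
    (hB : Set.Icc oB tB = {x : L | α.r x oB})
    (hcov : α.mkQ oA ⋖ α.mkQ oB)
    (hincomp : ¬ tA ≤ oB ∧ ¬ oB ≤ tA) :
    tA ⊓ oB ⋖ oB :=
  meet_covby_bottom_of_adjacent_classes_general α oA tA oB tB hA hB hcov hincomp
end

section
/- Every finite meet-semidistributive lattice with more than one element has the two-element chain as a homomorphic image. -/
/-!
The map `x ↦ (a ≤ x)` into the two-element chain always preserves meets, and it preserves
joins exactly when `a` is sup-prime. In a finite nontrivial lattice take an atom `a`: if
`a ≰ x` and `a ≰ y` then `a ⊓ x = ⊥ = a ⊓ y`, so meet-semidistributivity gives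
`a ⊓ (x ⊔ y) = ⊥`, whence `a ≰ x ⊔ y`. Thus atoms are sup-prime.
-/

def IsMeetSemidistrib (L : Type*) [Lattice L] : Prop :=
  ∀ x y z : L, x ⊓ y = x ⊓ z → x ⊓ y = x ⊓ (y ⊔ z)

theorem IsMeetSemidistrib.supPrime_of_isAtom {L : Type*} [Lattice L] [OrderBot L]
    (hsd : IsMeetSemidistrib L) {a : L} (ha : IsAtom a) : SupPrime a := by
  refine ⟨fun hmin => ha.ne_bot hmin.eq_bot, fun x y hxy => ?_⟩
  by_contra! h
  have hx : a ⊓ x = ⊥ := disjoint_iff.mp (ha.not_le_iff_disjoint.mp h.1)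
  have hy : a ⊓ y = ⊥ := disjoint_iff.mp (ha.not_le_iff_disjoint.mp h.2)
  have hxy' : a ⊓ (x ⊔ y) = ⊥ := (hsd a x y (hx.trans hy.symm)).symm.trans hx
  exact ha.ne_bot (inf_eq_left.mpr hxy ▸ hxy')

namespace SupPrime

variable {L : Type*} [Lattice L] [DecidableLE L] {a : L}

def leHom (ha : SupPrime a) : LatticeHom L Bool where
  toFun x := decide (a ≤ x)
  map_sup' x y := by simp [ha.le_sup]
  map_inf' x y := by simp

theorem leHom_surjective (ha : SupPrime a) : Function.Surjective ha.leHom := by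
  obtain ⟨b, hba⟩ := not_isMin_iff.mp ha.not_isMin
  rintro (_ | _)
  · exact ⟨b, by simpa [leHom] using hba.not_ge⟩
  · exact ⟨a, by simp [leHom]⟩

end SupPrime

/-- Every finite meet-semidistributive lattice with more than one element has
the two-element chain as a homomorphic image. -/
theorem meet_semidistributive_has_two_chain_image {L : Type*} [Lattice L] [Fintype L]
    [Nontrivial L]
    (hsd : ∀ x y z : L, x ⊓ y = x ⊓ z → x ⊓ y = x ⊓ (y ⊔ z)) :
    ∃ f : LatticeHom L Bool, Function.Surjective f := by
  classical
  let : OrderBot L := Fintype.toOrderBot L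
  obtain ⟨a, ha⟩ := IsAtomic.exists_atom L
  have hprime : SupPrime a := IsMeetSemidistrib.supPrime_of_isAtom hsd ha
  exact ⟨hprime.leHom, hprime.leHom_surjective⟩
end
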